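/- arXiv:1611.01496 — 4 statements merged into one kernel-verified Lean document; each statement's English description precedes it below -/
import Mathlib

section
/- Let ‖·‖ be a strictly convex norm on ℝ^d, let x₀, y ∈ ℝ^d with y ≠ x₀, set u = y − x₀, and let z ∈ ℝ^d be a point not on the line through x₀ and y. Define σ(t) = ‖z − (x₀ + t u)‖ − ‖z − x₀‖ + t‖u‖ for t ∈ (−1, 1). Then σ is convex, σ(0) = 0, σ(t) > 0 for t > 0 and σ(t) < 0 for t < 0; in particular the right derivative of σ at 0 is strictly positive. -/
/-!
`σ` is `t ↦ N(w − t u)` with `w = z − x₀`, plus an affine function of `t`, hence convex.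
Since `z` is off the line, no vector `w − t u` is a multiple of `u`, so strict convexity makes
the triangle inequality strict: for `t > 0` in `w = (w − t u) + t u`, for `t < 0` in
`w − t u = w + (−t) u`; this gives the signs of `σ`. Monotonicity of the slopes of the convex
`σ` then bounds `σ t / t` from below by `σ(−1/2) / (−1/2) > 0`.
-/

open Set

section StrictlyConvexFunctional

variable {E : Type*} [AddCommGroup E] [Module ℝ E] {N : E → ℝ}

theorem convexOn_sub_smul (hadd : ∀ a b, N (a + b) ≤ N a + N b)
    (hsmul : ∀ (c : ℝ) a, N (c • a) = |c| * N a) (w u : E) :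
    ConvexOn ℝ univ fun t : ℝ => N (w - t • u) := by
  refine ⟨convex_univ, fun s _ t _ p q hp hq hpq => ?_⟩
  obtain rfl : q = 1 - p := by linarith
  have hcomb : w - (p • s + (1 - p) • t) • u = p • (w - s • u) + (1 - p) • (w - t • u) := by
    simp only [smul_eq_mul]; module
  calc N (w - (p • s + (1 - p) • t) • u)
      ≤ N (p • (w - s • u)) + N ((1 - p) • (w - t • u)) := hcomb ▸ hadd _ _
    _ = p • N (w - s • u) + (1 - p) • N (w - t • u) := by
      rw [hsmul, hsmul, abs_of_nonneg hp, abs_of_nonneg hq, smul_eq_mul, smul_eq_mul]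

theorem lt_add_abs_mul_of_forall_ne_smul (hadd : ∀ a b, N (a + b) ≤ N a + N b)
    (hsmul : ∀ (c : ℝ) a, N (c • a) = |c| * N a)
    (hstrict : ∀ a b, a ≠ 0 → b ≠ 0 → N (a + b) = N a + N b → ∃ l : ℝ, 0 < l ∧ a = l • b)
    {w u : E} (hu : u ≠ 0) (hw : ∀ r : ℝ, w ≠ r • u) {s : ℝ} (hs : s ≠ 0) :
    N (w + s • u) < N w + |s| * N u := by
  rw [← hsmul]
  refine (hadd _ _).lt_of_ne fun heq => ?_
  have hw0 : w ≠ 0 := by simpa using hw 0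
  obtain ⟨l, -, hl⟩ := hstrict _ _ hw0 (smul_ne_zero hs hu) heq
  exact hw (l * s) (by rw [hl, mul_smul])

end StrictlyConvexFunctional

theorem ConvexOn.div_mul_le_of_map_zero {s : Set ℝ} {f : ℝ → ℝ} (hf : ConvexOn ℝ s f)
    (h0 : f 0 = 0) {a t : ℝ} (ha : a ∈ s) (ht : t ∈ s) (ha0 : a < 0) (ht0 : 0 < t) :
    f a / a * t ≤ f t := by
  have hslope := hf.slope_mono_adjacent ha ht ha0 ht0
  rw [h0, sub_zero, sub_zero, zero_sub, zero_sub, neg_div_neg_eq, le_div_iff₀ ht0] at hslope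
  exact hslope

theorem stmt1_general (d : ℕ) (N : (Fin d → ℝ) → ℝ)
    (hadd : ∀ a b, N (a + b) ≤ N a + N b)
    (hsmul : ∀ (c : ℝ) a, N (c • a) = |c| * N a)
    (hstrict : ∀ a b, a ≠ 0 → b ≠ 0 → N (a + b) = N a + N b →
      ∃ l : ℝ, 0 < l ∧ a = l • b)
    (x₀ y z : Fin d → ℝ) (hy : y ≠ x₀)
    (hz : ∀ s : ℝ, z ≠ x₀ + s • (y - x₀)) :
    let u := y - x₀
    let σ : ℝ → ℝ := fun t => N (z - (x₀ + t • u)) - N (z - x₀) + t * N u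
    ConvexOn ℝ (Set.Ioo (-1 : ℝ) 1) σ ∧ σ 0 = 0 ∧
      (∀ t ∈ Set.Ioo (-1 : ℝ) 1, 0 < t → 0 < σ t) ∧
      (∀ t ∈ Set.Ioo (-1 : ℝ) 1, t < 0 → σ t < 0) ∧
      (∃ c : ℝ, 0 < c ∧ ∀ t ∈ Set.Ioo (0 : ℝ) 1, c * t ≤ σ t) := by
  intro u σ
  set w := z - x₀
  have hu : u ≠ 0 := sub_ne_zero.mpr hy
  have hw : ∀ r : ℝ, w ≠ r • u := fun r h => hz r (by rw [← h, add_sub_cancel])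
  have hσ : σ = fun t => N (w - t • u) - N w + t * N u := by
    funext t; simp only [σ, w, sub_add_eq_sub_sub]
  have hconv : ConvexOn ℝ (Ioo (-1 : ℝ) 1) σ := by
    rw [hσ]
    exact (((convexOn_sub_smul hadd hsmul w u).sub (concaveOn_const _ convex_univ)).add
      ((LinearMap.mulRight ℝ (N u)).convexOn convex_univ)).subset (subset_univ _) (convex_Ioo _ _)
  have hσ0 : σ 0 = 0 := by simp [σ]
  have hpos : ∀ t ∈ Ioo (-1 : ℝ) 1, 0 < t → 0 < σ t := by
    intro t _ ht
    have hwt : ∀ r : ℝ, w - t • u ≠ r • u := fun r h =>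
      hw (r + t) (by rw [add_smul, ← h, sub_add_cancel])
    have := lt_add_abs_mul_of_forall_ne_smul hadd hsmul hstrict hu hwt ht.ne'
    rw [sub_add_cancel, abs_of_pos ht] at this
    rw [hσ]; linarith
  have hneg : ∀ t ∈ Ioo (-1 : ℝ) 1, t < 0 → σ t < 0 := by
    intro t _ ht
    have := lt_add_abs_mul_of_forall_ne_smul hadd hsmul hstrict hu hw (neg_ne_zero.mpr ht.ne)
    rw [neg_smul, ← sub_eq_add_neg, abs_neg, abs_of_neg ht] at this
    rw [hσ]; linarith
  have hhalf : (-1 / 2 : ℝ) ∈ Ioo (-1 : ℝ) 1 := by norm_num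
  refine ⟨hconv, hσ0, hpos, hneg, σ (-1 / 2) / (-1 / 2),
    div_pos_of_neg_of_neg (hneg _ hhalf (by norm_num)) (by norm_num), fun t ht => ?_⟩
  exact hconv.div_mul_le_of_map_zero hσ0 hhalf ⟨by linarith [ht.1], ht.2⟩ (by norm_num) ht.1

/-- For a strictly convex norm `N` on `ℝ^d`, points `x₀ ≠ y`, `u = y − x₀`, and
`z` not on the line through `x₀` and `y`, the function
`σ(t) = N(z − (x₀ + t u)) − N(z − x₀) + t N(u)` is convex on `(−1,1)`, vanishes at `0`,
is positive for `t > 0` and negative for `t < 0`; in particular its right derivative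
at `0` is strictly positive (there is `c > 0` with `σ(t) ≥ c t` for `t ∈ (0,1)`). -/
theorem stmt1 (d : ℕ) (N : (Fin d → ℝ) → ℝ)
    (hadd : ∀ a b, N (a + b) ≤ N a + N b)
    (hsmul : ∀ (c : ℝ) a, N (c • a) = |c| * N a)
    (hdef : ∀ a, N a = 0 → a = 0)
    (hstrict : ∀ a b, a ≠ 0 → b ≠ 0 → N (a + b) = N a + N b →
      ∃ l : ℝ, 0 < l ∧ a = l • b)
    (x₀ y z : Fin d → ℝ) (hy : y ≠ x₀)
    (hz : ∀ s : ℝ, z ≠ x₀ + s • (y - x₀)) :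
    let u := y - x₀
    let σ : ℝ → ℝ := fun t => N (z - (x₀ + t • u)) - N (z - x₀) + t * N u
    ConvexOn ℝ (Set.Ioo (-1 : ℝ) 1) σ ∧ σ 0 = 0 ∧
      (∀ t ∈ Set.Ioo (-1 : ℝ) 1, 0 < t → 0 < σ t) ∧
      (∀ t ∈ Set.Ioo (-1 : ℝ) 1, t < 0 → σ t < 0) ∧
      (∃ c : ℝ, 0 < c ∧ ∀ t ∈ Set.Ioo (0 : ℝ) 1, c * t ≤ σ t) :=
  stmt1_general d N hadd hsmul hstrict x₀ y z hy hz
end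

section
/- Let β : ℝ^d → ℝ be convex and define ψ_i : ℝ → ℝ successively for i = 1,…,d by ψ_i(y_i) = sup over (y_j)_{j≠i} of ( β(y) − ∑_{j<i} ψ_j(y_j) − ∑_{j>i} g_j(y_j) ), where g_j : ℝ → ℝ are given functions with ∑_j g_j(y_j) ≥ β(y) for all y, and assume all suprema are finite. Then each ψ_i is convex, ψ_i ≤ g_i pointwise, and β(y) ≤ ∑_i ψ_i(y_i) for all y. -/
/-! Each `ψ i` is a supremum, over the coordinates other than the `i`-th, of functions convex in
`y i`: `β` restricted to a coordinate line, minus terms that do not involve `y i`. Hence it is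
convex.

The defining inequality of `ψ k` reads `β y ≤ ∑_{j ≤ k} ψ j (y j) + ∑_{j > k} g j (y j)`, so
`β` is dominated by every cutoff sum `S k = ∑_{j < k} ψ j (y j) + ∑_{j ≥ k} g j (y j)`, the case
`k = 0` being the hypothesis on `g`. The case `k = d` is the last claim, and `β ≤ S i` says that
`g i t` bounds the set whose supremum is `ψ i t`. -/

open Finset Function

theorem ConvexOn.of_isLUB_range {𝕜 E β ι : Type*} [Semiring 𝕜] [PartialOrder 𝕜]
    [AddCommMonoid E] [SMul 𝕜 E] [AddCommMonoid β] [PartialOrder β] [IsOrderedAddMonoid β]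
    [SMul 𝕜 β] [PosSMulMono 𝕜 β] {s : Set E} {f : ι → E → β} {φ : E → β}
    (hs : Convex 𝕜 s) (hf : ∀ k, ConvexOn 𝕜 s (f k))
    (hφ : ∀ x ∈ s, IsLUB (Set.range fun k => f k x) (φ x)) : ConvexOn 𝕜 s φ := by
  refine ⟨hs, fun x hx y hy a b ha hb hab => (hφ _ (hs hx hy ha hb hab)).2 ?_⟩
  rintro _ ⟨k, rfl⟩
  calc f k (a • x + b • y) ≤ a • f k x + b • f k y := (hf k).2 hx hy ha hb hab
    _ ≤ a • φ x + b • φ y := by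
      gcongr
      · exact (hφ x hx).1 ⟨k, rfl⟩
      · exact (hφ y hy).1 ⟨k, rfl⟩

theorem ConvexOn.comp_update {𝕜 ι β : Type*} {M : ι → Type*} [Semiring 𝕜] [PartialOrder 𝕜]
    [∀ i, AddCommMonoid (M i)] [∀ i, Module 𝕜 (M i)] [AddCommMonoid β] [PartialOrder β]
    [SMul 𝕜 β] [DecidableEq ι] {f : (∀ i, M i) → β} (hf : ConvexOn 𝕜 Set.univ f)
    (z : ∀ i, M i) (i : ι) : ConvexOn 𝕜 Set.univ fun x => f (update z i x) := by
  refine ⟨convex_univ, fun x _ y _ a b ha hb hab => ?_⟩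
  have hupdate : update z i (a • x + b • y) = a • update z i x + b • update z i y := by
    simp only [← update_smul, ← update_add, Convex.combo_self hab]
  simpa only [hupdate] using hf.2 trivial trivial ha hb hab

theorem ConvexOn.of_isLUB_fiber {𝕜 ι E β : Type*} [Semiring 𝕜] [PartialOrder 𝕜]
    [AddCommMonoid E] [SMul 𝕜 E] [AddCommMonoid β] [PartialOrder β]
    [IsOrderedAddMonoid β] [SMul 𝕜 β] [PosSMulMono 𝕜 β] [DecidableEq ι]
    {F : (ι → E) → β} {i : ι} {φ : E → β}
    (hF : ∀ z, ConvexOn 𝕜 Set.univ fun x => F (update z i x))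
    (hφ : ∀ x, IsLUB {v | ∃ y : ι → E, y i = x ∧ v = F y} (φ x)) :
    ConvexOn 𝕜 Set.univ φ := by
  refine .of_isLUB_range convex_univ hF fun x _ => ?_
  convert hφ x using 1
  ext v
  constructor
  · rintro ⟨z, rfl⟩
    exact ⟨update z i x, update_self i x z, rfl⟩
  · rintro ⟨y, rfl, rfl⟩
    exact ⟨y, congrArg F (update_eq_self i y)⟩

theorem Finset.sum_univ_eq_sum_lt_add_add_sum_gt {ι M : Type*} [Fintype ι] [LinearOrder ι]
    [AddCommMonoid M] (u : ι → M) (i : ι) :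
    ∑ j, u j = ∑ j ∈ univ.filter (· < i), u j + u i + ∑ j ∈ univ.filter (i < ·), u j := by
  have hge : univ.filter (fun j => ¬j < i) = insert i (univ.filter (i < ·)) := by
    ext j
    simp only [mem_filter, mem_univ, true_and, mem_insert, not_lt, le_iff_eq_or_lt, eq_comm]
  rw [← sum_filter_add_sum_filter_not univ (· < i), hge, sum_insert (by simp), add_assoc]

theorem Finset.sum_apply_update_of_notMem {ι α M : Type*} [DecidableEq ι] [AddCommMonoid M]
    {s : Finset ι} {i : ι} (hi : i ∉ s) (u : ι → α → M) (y : ι → α) (t : α) :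
    ∑ j ∈ s, u j (update y i t j) = ∑ j ∈ s, u j (y j) :=
  sum_congr rfl fun j hj => by rw [update_of_ne (ne_of_mem_of_not_mem hj hi)]

theorem Fin.sum_ite_val_lt {d : ℕ} {α M : Type*} [AddCommMonoid M] (g ψ : Fin d → α → M)
    (i : Fin d) {k : ℕ} (hik : (i : ℕ) ≤ k) (hki : k ≤ i + 1) (y : Fin d → α) :
    ∑ j : Fin d, (if (j : ℕ) < k then ψ j (y j) else g j (y j)) =
      ∑ j ∈ univ.filter (· < i), ψ j (y j) + (if (i : ℕ) < k then ψ i (y i) else g i (y i)) +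
        ∑ j ∈ univ.filter (i < ·), g j (y j) := by
  have below : ∀ j ∈ univ.filter (· < i),
      (if (j : ℕ) < k then ψ j (y j) else g j (y j)) = ψ j (y j) := fun j hj =>
    if_pos (by simp only [mem_filter, mem_univ, true_and, Fin.lt_def] at hj; omega)
  have above : ∀ j ∈ univ.filter (i < ·),
      (if (j : ℕ) < k then ψ j (y j) else g j (y j)) = g j (y j) := fun j hj =>
    if_neg (by simp only [mem_filter, mem_univ, true_and, Fin.lt_def] at hj; omega)
  rw [sum_univ_eq_sum_lt_add_add_sum_gt _ i, sum_congr rfl below, sum_congr rfl above]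

theorem le_sum_ite_lt {d : ℕ} {β : (Fin d → ℝ) → ℝ} {g ψ : Fin d → ℝ → ℝ}
    (hg : ∀ y, β y ≤ ∑ j, g j (y j))
    (hψ : ∀ (i : Fin d) y, β y - ∑ j ∈ univ.filter (· < i), ψ j (y j)
      - ∑ j ∈ univ.filter (i < ·), g j (y j) ≤ ψ i (y i)) :
    ∀ k ≤ d, ∀ y, β y ≤ ∑ j : Fin d, if (j : ℕ) < k then ψ j (y j) else g j (y j)
  | 0, _, y => by simpa using hg y
  | k + 1, hk, y => by
    have := hψ ⟨k, hk⟩ y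
    rw [Fin.sum_ite_val_lt g ψ ⟨k, hk⟩ (by simp) le_rfl, if_pos (Nat.lt_succ_self k)]
    linarith

/-- Successive partial Legendre transforms of a convex function: if `β` is convex,
`∑ g_j(y_j) ≥ β(y)` for all `y`, and each `ψ_i` is defined by the (finite) supremum
`ψ_i(y_i) = sup_{(y_j)_{j≠i}} ( β(y) − ∑_{j<i} ψ_j(y_j) − ∑_{j>i} g_j(y_j) )`, then each
`ψ_i` is convex, `ψ_i ≤ g_i` pointwise, and `β(y) ≤ ∑ ψ_i(y_i)` for all `y`. -/
theorem stmt13 (d : ℕ) (β : (Fin d → ℝ) → ℝ) (hβ : ConvexOn ℝ Set.univ β)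
    (g ψ : Fin d → ℝ → ℝ)
    (hg : ∀ y : Fin d → ℝ, β y ≤ ∑ j, g j (y j))
    (hψ : ∀ (i : Fin d) (t : ℝ),
      IsLUB {v : ℝ | ∃ y : Fin d → ℝ, y i = t ∧
        v = β y - (∑ j ∈ Finset.univ.filter (fun j => j < i), ψ j (y j))
              - (∑ j ∈ Finset.univ.filter (fun j => i < j), g j (y j))} (ψ i t)) :
    (∀ i, ConvexOn ℝ Set.univ (ψ i)) ∧ (∀ i t, ψ i t ≤ g i t) ∧
    (∀ y : Fin d → ℝ, β y ≤ ∑ i, ψ i (y i)) := by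
  have hcut := le_sum_ite_lt hg fun i y => (hψ i (y i)).1 ⟨y, rfl, rfl⟩
  refine ⟨fun i => ?_, fun i t => ?_, fun y => ?_⟩
  · refine .of_isLUB_fiber (fun z => ?_) (hψ i)
    simp (disch := simp) only [sum_apply_update_of_notMem]
    exact ((hβ.comp_update z i).sub (concaveOn_const _ convex_univ)).sub
      (concaveOn_const _ convex_univ)
  · refine (hψ i t).2 ?_
    rintro _ ⟨y, rfl, rfl⟩
    have := hcut i i.is_lt.le y
    rw [Fin.sum_ite_val_lt g ψ i le_rfl (Nat.le_succ _), if_neg (lt_irrefl _)] at this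
    linarith
  · simpa using hcut d le_rfl y
end

section
/- Let π be a probability measure on ℝ^d × ℝ^d concentrated on a set G, and suppose there exist functions f : ℝ^d → ℝ, h : ℝ^d → ℝ^d, g : ℝ^d → ℝ and a cost c with f(x) + h(x)·(y−x) − c(x,y) ≤ g(y) for all (x,y), with equality on G. If π is a martingale coupling with marginals π¹, π², h is bounded, and f ∈ L¹(π¹), g ∈ L¹(π²), c ∈ L¹(π), then ∫ c dπ = ∫ f dπ¹ − ∫ g dπ², and consequently π minimizes ∫ c dπ' over all martingale couplings π' with the same marginals π¹, π² and c ∈ L¹(π'). -/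
open MeasureTheory
open scoped BigOperators NNReal ENNReal

/-- A martingale coupling on `E × E`. -/
def IsMartingaleCoupling {E : Type*} [NormedAddCommGroup E] [NormedSpace ℝ E]
    [CompleteSpace E] [MeasurableSpace E] (π : Measure (E × E)) : Prop :=
  IsProbabilityMeasure π ∧ Integrable (fun p : E × E => ‖p.1‖ + ‖p.2‖) π ∧
  ∀ s : Set E, MeasurableSet s →
    (∫ p in s ×ˢ Set.univ, p.2 ∂π) = ∫ p in s ×ˢ Set.univ, p.1 ∂π

section Aux

variable {d : ℕ}

private lemma comp_zero (π : Measure ((Fin d → ℝ) × (Fin d → ℝ)))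
    (hπ : IsMartingaleCoupling π) (k : (Fin d → ℝ) → ℝ) (hk : Measurable k)
    (M : ℝ) (hbk : ∀ x, |k x| ≤ M) (i : Fin d) :
    ∫ p, k p.1 * (p.2 i - p.1 i) ∂π = 0 := by
  obtain ⟨hprob, hint, hmart⟩ := hπ
  set u : (Fin d → ℝ) × (Fin d → ℝ) → ℝ := fun p => p.2 i - p.1 i with hu_def
  have hum : Measurable u :=
    ((measurable_pi_apply i).comp measurable_snd).sub
      ((measurable_pi_apply i).comp measurable_fst)
  have hubound : ∀ p : (Fin d → ℝ) × (Fin d → ℝ), ‖u p‖ ≤ ‖p.1‖ + ‖p.2‖ := by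
    intro p
    have h1 : |p.2 i| ≤ ‖p.2‖ := by
      simpa using norm_le_pi_norm p.2 i
    have h2 : |p.1 i| ≤ ‖p.1‖ := by
      simpa using norm_le_pi_norm p.1 i
    calc ‖u p‖ = |p.2 i - p.1 i| := rfl
      _ ≤ |p.2 i| + |p.1 i| := abs_sub _ _
      _ ≤ ‖p.1‖ + ‖p.2‖ := by linarith
  have hu : Integrable u π :=
    hint.mono' hum.aestronglyMeasurable (Filter.Eventually.of_forall hubound)
  -- integrability of components
  have hint1 : Integrable (fun p : (Fin d → ℝ) × (Fin d → ℝ) => p.1) π := by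
    refine hint.mono' measurable_fst.aestronglyMeasurable ?_
    filter_upwards with p
    have := norm_nonneg p.2; linarith [le_refl ‖p.1‖]
  have hint2 : Integrable (fun p : (Fin d → ℝ) × (Fin d → ℝ) => p.2) π := by
    refine hint.mono' measurable_snd.aestronglyMeasurable ?_
    filter_upwards with p
    have := norm_nonneg p.1; linarith [le_refl ‖p.2‖]
  -- the martingale property in component form
  have hzero : ∀ s : Set (Fin d → ℝ), MeasurableSet s →
      ∫ p in s ×ˢ Set.univ, u p ∂π = 0 := by
    intro s hs
    have h2 : (∫ p in s ×ˢ Set.univ, p.2 ∂π) = ∫ p in s ×ˢ Set.univ, p.1 ∂π :=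
      hmart s hs
    have e2 : ∫ p in s ×ˢ Set.univ, p.2 i ∂π = (∫ p in s ×ˢ Set.univ, p.2 ∂π) i := by
      exact (ContinuousLinearMap.proj (R := ℝ) (φ := fun _ : Fin d => ℝ)
        i).integral_comp_comm (hint2.restrict)
    have e1 : ∫ p in s ×ˢ Set.univ, p.1 i ∂π = (∫ p in s ×ˢ Set.univ, p.1 ∂π) i := by
      exact (ContinuousLinearMap.proj (R := ℝ) (φ := fun _ : Fin d => ℝ)
        i).integral_comp_comm (hint1.restrict)
    have : ∫ p in s ×ˢ Set.univ, u p ∂π =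
        (∫ p in s ×ˢ Set.univ, p.2 i ∂π) - ∫ p in s ×ˢ Set.univ, p.1 i ∂π := by
      apply integral_sub
      · refine hint.restrict.mono' ((measurable_pi_apply i).comp
          measurable_snd).aestronglyMeasurable ?_
        filter_upwards with p
        have := norm_le_pi_norm p.2 i
        have := norm_nonneg p.1
        simp only [Real.norm_eq_abs] at *
        linarith
      · refine hint.restrict.mono' ((measurable_pi_apply i).comp
          measurable_fst).aestronglyMeasurable ?_
        filter_upwards with p
        have := norm_le_pi_norm p.1 i
        have := norm_nonneg p.2
        simp only [Real.norm_eq_abs] at *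
        linarith
    rw [this, e1, e2, h2, sub_self]
  -- positive and negative density parts
  set wp : (Fin d → ℝ) × (Fin d → ℝ) → ℝ≥0 := fun p => (u p).toNNReal with hwp
  set wn : (Fin d → ℝ) × (Fin d → ℝ) → ℝ≥0 := fun p => (-u p).toNNReal with hwn
  have hwpm : Measurable wp := hum.real_toNNReal
  have hwnm : Measurable wn := hum.neg.real_toNNReal
  have hfinp : ∫⁻ p, (wp p : ℝ≥0∞) ∂π < ⊤ := by
    refine lt_of_le_of_lt ?_ hu.2
    apply lintegral_mono
    intro p
    simp only [hwp, ENNReal.coe_le_coe]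
    exact (ENNReal.ofReal_le_ofReal (by simpa using le_abs_self (u p))).trans_eq
      (Real.enorm_eq_ofReal_abs _).symm
  have hfinn : ∫⁻ p, (wn p : ℝ≥0∞) ∂π < ⊤ := by
    refine lt_of_le_of_lt ?_ hu.2
    apply lintegral_mono
    intro p
    simp only [hwn, ENNReal.coe_le_coe]
    refine (ENNReal.ofReal_le_ofReal ?_).trans_eq (Real.enorm_eq_ofReal_abs _).symm
    simpa [abs_neg] using le_abs_self (-u p)
  -- the two withDensity measures agree on rectangles s ×ˢ univ
  have hkey : ∀ s : Set (Fin d → ℝ), MeasurableSet s →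
      π.withDensity (fun p => (wp p : ℝ≥0∞)) (s ×ˢ Set.univ) =
      π.withDensity (fun p => (wn p : ℝ≥0∞)) (s ×ˢ Set.univ) := by
    intro s hs
    have hA : MeasurableSet (s ×ˢ (Set.univ : Set (Fin d → ℝ))) := hs.prod MeasurableSet.univ
    rw [withDensity_apply _ hA, withDensity_apply _ hA]
    have hrepr := integral_eq_lintegral_pos_part_sub_lintegral_neg_part (hu.restrict (s := s ×ˢ Set.univ))
    rw [hzero s hs] at hrepr
    have hcoe_p : ∀ p, ENNReal.ofReal (u p) = (wp p : ℝ≥0∞) := by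
      intro p; simp [hwp, ENNReal.ofReal]
    have hcoe_n : ∀ p, ENNReal.ofReal (-u p) = (wn p : ℝ≥0∞) := by
      intro p; simp [hwn, ENNReal.ofReal]
    simp only [hcoe_p, hcoe_n] at hrepr
    have hfp : ∫⁻ p in s ×ˢ Set.univ, (wp p : ℝ≥0∞) ∂π ≠ ⊤ :=
      (lt_of_le_of_lt (setLIntegral_le_lintegral _ _) hfinp).ne
    have hfn : ∫⁻ p in s ×ˢ Set.univ, (wn p : ℝ≥0∞) ∂π ≠ ⊤ :=
      (lt_of_le_of_lt (setLIntegral_le_lintegral _ _) hfinn).ne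
    have := sub_eq_zero.mp hrepr.symm
    exact (ENNReal.toReal_eq_toReal_iff' hfp hfn).mp this
  -- the mapped measures are equal
  have hmapeq : (π.withDensity (fun p => (wp p : ℝ≥0∞))).map Prod.fst =
      (π.withDensity (fun p => (wn p : ℝ≥0∞))).map Prod.fst := by
    apply Measure.ext
    intro s hs
    rw [Measure.map_apply measurable_fst hs, Measure.map_apply measurable_fst hs,
      ← Set.prod_univ, hkey s hs]
  -- convert integrals
  have hconv : ∀ w : (Fin d → ℝ) × (Fin d → ℝ) → ℝ≥0, Measurable w →
      ∫ x, k x ∂((π.withDensity (fun p => (w p : ℝ≥0∞))).map Prod.fst) =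
      ∫ p, (w p : ℝ) * k p.1 ∂π := by
    intro w hw
    rw [integral_map measurable_fst.aemeasurable hk.aestronglyMeasurable,
      integral_withDensity_eq_integral_smul hw]
    simp [NNReal.smul_def]
  have heqint : ∫ p, (wp p : ℝ) * k p.1 ∂π = ∫ p, (wn p : ℝ) * k p.1 ∂π := by
    rw [← hconv wp hwpm, ← hconv wn hwnm, hmapeq]
  -- integrability of the parts
  have hintp : Integrable (fun p => (wp p : ℝ) * k p.1) π := by
    refine (hu.norm.const_mul M).mono' ?_ ?_
    · exact ((hwpm.coe_nnreal_real).mul (hk.comp measurable_fst)).aestronglyMeasurable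
    · filter_upwards with p
      have h1 : (wp p : ℝ) ≤ |u p| := by
        simp only [hwp, Real.coe_toNNReal']
        rcases le_total (u p) 0 with hle | hle
        · simp [max_eq_right hle, abs_nonneg]
        · simp [max_eq_left hle, le_abs_self]
      have h2 : |k p.1| ≤ M := hbk p.1
      have h0 : (0:ℝ) ≤ (wp p : ℝ) := (wp p).coe_nonneg
      calc ‖(wp p : ℝ) * k p.1‖ = (wp p : ℝ) * |k p.1| := by
            rw [norm_mul]; simp [abs_of_nonneg h0]
        _ ≤ |u p| * M := by
            apply mul_le_mul h1 h2 (abs_nonneg _) (abs_nonneg _)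
        _ = M * ‖u p‖ := by rw [mul_comm]; rfl
  have hintn : Integrable (fun p => (wn p : ℝ) * k p.1) π := by
    refine (hu.norm.const_mul M).mono' ?_ ?_
    · exact ((hwnm.coe_nnreal_real).mul (hk.comp measurable_fst)).aestronglyMeasurable
    · filter_upwards with p
      have h1 : (wn p : ℝ) ≤ |u p| := by
        simp only [hwn, Real.coe_toNNReal']
        rcases le_total (u p) 0 with hle | hle
        · simp only [max_le_iff]
          constructor
          · simpa [abs_of_nonpos hle] using le_refl (-u p)
          · exact abs_nonneg _
        · simp [max_eq_right (neg_nonpos_of_nonneg hle), abs_nonneg]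
      have h2 : |k p.1| ≤ M := hbk p.1
      have h0 : (0:ℝ) ≤ (wn p : ℝ) := (wn p).coe_nonneg
      calc ‖(wn p : ℝ) * k p.1‖ = (wn p : ℝ) * |k p.1| := by
            rw [norm_mul]; simp [abs_of_nonneg h0]
        _ ≤ |u p| * M := by
            apply mul_le_mul h1 h2 (abs_nonneg _) (abs_nonneg _)
        _ = M * ‖u p‖ := by rw [mul_comm]; rfl
  -- put it together
  have hdecomp : ∀ p, k p.1 * u p = (wp p : ℝ) * k p.1 - (wn p : ℝ) * k p.1 := by
    intro p
    have : (wp p : ℝ) - (wn p : ℝ) = u p := by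
      simp only [hwp, hwn, Real.coe_toNNReal']
      exact max_zero_sub_max_neg_zero_eq_self (u p)
    rw [← sub_mul, this, mul_comm]
  calc ∫ p, k p.1 * (p.2 i - p.1 i) ∂π
      = ∫ p, ((wp p : ℝ) * k p.1 - (wn p : ℝ) * k p.1) ∂π := by
        apply integral_congr_ae
        filter_upwards with p
        exact hdecomp p
    _ = (∫ p, (wp p : ℝ) * k p.1 ∂π) - ∫ p, (wn p : ℝ) * k p.1 ∂π :=
        integral_sub hintp hintn
    _ = 0 := by rw [heqint, sub_self]


private lemma S_integrable (π : Measure ((Fin d → ℝ) × (Fin d → ℝ)))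
    (hint : Integrable (fun p : (Fin d → ℝ) × (Fin d → ℝ) => ‖p.1‖ + ‖p.2‖) π)
    (h : (Fin d → ℝ) → (Fin d → ℝ)) (hm : Measurable h)
    (M : ℝ) (hb : ∀ x, ‖h x‖ ≤ M) :
    Integrable (fun p : (Fin d → ℝ) × (Fin d → ℝ) =>
      ∑ i, h p.1 i * (p.2 i - p.1 i)) π := by
  apply integrable_finset_sum
  intro i _
  refine (hint.const_mul M).mono' ?_ ?_
  · exact (((measurable_pi_apply i).comp (hm.comp measurable_fst)).mul
      (((measurable_pi_apply i).comp measurable_snd).sub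
        ((measurable_pi_apply i).comp measurable_fst))).aestronglyMeasurable
  · filter_upwards with p
    have h1 : |h p.1 i| ≤ M := le_trans (by simpa using norm_le_pi_norm (h p.1) i) (hb p.1)
    have h2 : |p.2 i - p.1 i| ≤ ‖p.1‖ + ‖p.2‖ := by
      have a1 : |p.2 i| ≤ ‖p.2‖ := by simpa using norm_le_pi_norm p.2 i
      have a2 : |p.1 i| ≤ ‖p.1‖ := by simpa using norm_le_pi_norm p.1 i
      calc |p.2 i - p.1 i| ≤ |p.2 i| + |p.1 i| := abs_sub _ _
        _ ≤ ‖p.1‖ + ‖p.2‖ := by linarith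
    calc ‖h p.1 i * (p.2 i - p.1 i)‖ = |h p.1 i| * |p.2 i - p.1 i| := by
          rw [norm_mul]; rfl
      _ ≤ M * (‖p.1‖ + ‖p.2‖) :=
          mul_le_mul h1 h2 (abs_nonneg _) (le_trans (abs_nonneg _) h1)

private lemma S_zero (π : Measure ((Fin d → ℝ) × (Fin d → ℝ)))
    (hπ : IsMartingaleCoupling π) (h : (Fin d → ℝ) → (Fin d → ℝ))
    (hm : Measurable h) (M : ℝ) (hb : ∀ x, ‖h x‖ ≤ M) :
    ∫ p, (∑ i, h p.1 i * (p.2 i - p.1 i)) ∂π = 0 := by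
  rw [integral_finset_sum]
  · apply Finset.sum_eq_zero
    intro i _
    exact comp_zero π hπ (fun x => h x i) ((measurable_pi_apply i).comp hm) M
      (fun x => le_trans (by simpa using norm_le_pi_norm (h x) i) (hb x)) i
  · intro i _
    refine (hπ.2.1.const_mul M).mono' ?_ ?_
    · exact (((measurable_pi_apply i).comp (hm.comp measurable_fst)).mul
        (((measurable_pi_apply i).comp measurable_snd).sub
          ((measurable_pi_apply i).comp measurable_fst))).aestronglyMeasurable
    · filter_upwards with p
      have h1 : |h p.1 i| ≤ M := le_trans (by simpa using norm_le_pi_norm (h p.1) i) (hb p.1)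
      have h2 : |p.2 i - p.1 i| ≤ ‖p.1‖ + ‖p.2‖ := by
        have a1 : |p.2 i| ≤ ‖p.2‖ := by simpa using norm_le_pi_norm p.2 i
        have a2 : |p.1 i| ≤ ‖p.1‖ := by simpa using norm_le_pi_norm p.1 i
        calc |p.2 i - p.1 i| ≤ |p.2 i| + |p.1 i| := abs_sub _ _
          _ ≤ ‖p.1‖ + ‖p.2‖ := by linarith
      calc ‖h p.1 i * (p.2 i - p.1 i)‖ = |h p.1 i| * |p.2 i - p.1 i| := by
            rw [norm_mul]; rfl
        _ ≤ M * (‖p.1‖ + ‖p.2‖) :=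
            mul_le_mul h1 h2 (abs_nonneg _) (le_trans (abs_nonneg _) h1)

end Aux

/-- If a martingale coupling `π` is concentrated on the contact set of a dual triple
`(f, g, h)` for the cost `c` (with `h` bounded and `f, g, c` integrable), then
`∫ c dπ = ∫ f dπ¹ − ∫ g dπ²`, and `π` minimizes `∫ c dπ'` over martingale couplings `π'`
with the same marginals. -/
theorem stmt16 (d : ℕ) (π : Measure ((Fin d → ℝ) × (Fin d → ℝ)))
    (hπ : IsMartingaleCoupling π)
    (G : Set ((Fin d → ℝ) × (Fin d → ℝ))) (hGm : MeasurableSet G) (hGfull : π Gᶜ = 0)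
    (f g : (Fin d → ℝ) → ℝ) (h : (Fin d → ℝ) → (Fin d → ℝ))
    (c : (Fin d → ℝ) × (Fin d → ℝ) → ℝ)
    (hm : Measurable h) (hb : ∃ M : ℝ, ∀ x, ‖h x‖ ≤ M)
    (hineq : ∀ x y : Fin d → ℝ,
      f x + (∑ i, h x i * (y i - x i)) - c (x, y) ≤ g y)
    (heq : ∀ p ∈ G, f p.1 + (∑ i, h p.1 i * (p.2 i - p.1 i)) - c p = g p.2)
    (hf : Integrable f π.fst) (hg : Integrable g π.snd) (hc : Integrable c π) :
    ((∫ p, c p ∂π) = (∫ x, f x ∂π.fst) - ∫ y, g y ∂π.snd) ∧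
    ∀ π' : Measure ((Fin d → ℝ) × (Fin d → ℝ)), IsMartingaleCoupling π' →
      π'.fst = π.fst → π'.snd = π.snd → Integrable c π' →
      (∫ p, c p ∂π) ≤ ∫ p, c p ∂π' := by
  obtain ⟨M, hb⟩ := hb
  set S : (Fin d → ℝ) × (Fin d → ℝ) → ℝ :=
    fun p => ∑ i, h p.1 i * (p.2 i - p.1 i) with hS_def
  -- marginals as maps
  have hfst_eq : π.fst = π.map Prod.fst := rfl
  have hsnd_eq : π.snd = π.map Prod.snd := rfl
  -- integrability of compositions
  have hfc : Integrable (fun p : (Fin d → ℝ) × (Fin d → ℝ) => f p.1) π := by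
    have := (integrable_map_measure hf.aestronglyMeasurable
      measurable_fst.aemeasurable).mp (hfst_eq ▸ hf)
    exact this
  have hgc : Integrable (fun p : (Fin d → ℝ) × (Fin d → ℝ) => g p.2) π := by
    have := (integrable_map_measure hg.aestronglyMeasurable
      measurable_snd.aemeasurable).mp (hsnd_eq ▸ hg)
    exact this
  have hSint : Integrable S π := S_integrable π hπ.2.1 h hm M hb
  have hSzero : ∫ p, S p ∂π = 0 := S_zero π hπ h hm M hb
  -- integral identities for marginals
  have hf_marg : ∫ p, f p.1 ∂π = ∫ x, f x ∂π.fst := by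
    rw [hfst_eq, integral_map measurable_fst.aemeasurable
      (hfst_eq ▸ hf.aestronglyMeasurable)]
  have hg_marg : ∫ p, g p.2 ∂π = ∫ y, g y ∂π.snd := by
    rw [hsnd_eq, integral_map measurable_snd.aemeasurable
      (hsnd_eq ▸ hg.aestronglyMeasurable)]
  -- a.e. equality on G
  have haeG : ∀ᵐ p ∂π, p ∈ G := by
    rw [ae_iff]
    exact hGfull
  have hae : (fun p => c p) =ᵐ[π] (fun p => f p.1 + S p - g p.2) := by
    filter_upwards [haeG] with p hp
    have := heq p hp
    linarith
  have key : (∫ p, c p ∂π) = (∫ x, f x ∂π.fst) - ∫ y, g y ∂π.snd := by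
    calc ∫ p, c p ∂π = ∫ p, (f p.1 + S p - g p.2) ∂π := integral_congr_ae hae
      _ = (∫ p, (f p.1 + S p) ∂π) - ∫ p, g p.2 ∂π :=
          integral_sub (hfc.add hSint) hgc
      _ = ((∫ p, f p.1 ∂π) + ∫ p, S p ∂π) - ∫ p, g p.2 ∂π := by
          rw [integral_add hfc hSint]
      _ = (∫ x, f x ∂π.fst) - ∫ y, g y ∂π.snd := by
          rw [hSzero, hf_marg, hg_marg]; ring
  refine ⟨key, ?_⟩
  intro π' hπ' hfst' hsnd' hc'
  have hfst'_eq : π'.fst = π'.map Prod.fst := rfl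
  have hsnd'_eq : π'.snd = π'.map Prod.snd := rfl
  have hfP : Integrable f π'.fst := hfst' ▸ hf
  have hgP : Integrable g π'.snd := hsnd' ▸ hg
  have hfc' : Integrable (fun p : (Fin d → ℝ) × (Fin d → ℝ) => f p.1) π' :=
    (integrable_map_measure hfP.aestronglyMeasurable
      measurable_fst.aemeasurable).mp (hfst'_eq ▸ hfP)
  have hgc' : Integrable (fun p : (Fin d → ℝ) × (Fin d → ℝ) => g p.2) π' :=
    (integrable_map_measure hgP.aestronglyMeasurable
      measurable_snd.aemeasurable).mp (hsnd'_eq ▸ hgP)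
  have hSint' : Integrable S π' := S_integrable π' hπ'.2.1 h hm M hb
  have hSzero' : ∫ p, S p ∂π' = 0 := S_zero π' hπ' h hm M hb
  have hf_marg' : ∫ p, f p.1 ∂π' = ∫ x, f x ∂π'.fst := by
    rw [hfst'_eq, integral_map measurable_fst.aemeasurable
      (hfst'_eq ▸ hfP.aestronglyMeasurable)]
  have hg_marg' : ∫ p, g p.2 ∂π' = ∫ y, g y ∂π'.snd := by
    rw [hsnd'_eq, integral_map measurable_snd.aemeasurable
      (hsnd'_eq ▸ hgP.aestronglyMeasurable)]
  have hmono : ∫ p, (f p.1 + S p - g p.2) ∂π' ≤ ∫ p, c p ∂π' := by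
    apply integral_mono ((hfc'.add hSint').sub hgc') hc'
    intro p
    have := hineq p.1 p.2
    simp only [Prod.mk.eta] at this
    simp only [hS_def, Pi.add_apply, Pi.sub_apply]
    linarith
  have hval : ∫ p, (f p.1 + S p - g p.2) ∂π' =
      (∫ x, f x ∂π.fst) - ∫ y, g y ∂π.snd := by
    calc ∫ p, (f p.1 + S p - g p.2) ∂π'
        = (∫ p, (f p.1 + S p) ∂π') - ∫ p, g p.2 ∂π' :=
          integral_sub (hfc'.add hSint') hgc'
      _ = ((∫ p, f p.1 ∂π') + ∫ p, S p ∂π') - ∫ p, g p.2 ∂π' := by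
          rw [integral_add hfc' hSint']
      _ = (∫ x, f x ∂π.fst) - ∫ y, g y ∂π.snd := by
          rw [hSzero', hf_marg', hg_marg', hfst', hsnd']; ring
  rw [key, ← hval]
  exact hmono
end

section
/- Let μ ≤_c ν be probability measures on ℝ in convex order with potential functions u_μ, u_ν. If z ∈ ℝ satisfies u_μ(z) = u_ν(z), then every martingale coupling π ∈ MT(μ, ν) decomposes at z: π gives no mass to the set {(x,y) : x < z < y or y < z < x}; equivalently, π is concentrated on ((−∞, z] × (−∞, z]) ∪ ([z, ∞) × [z, ∞)). -/
/-!
If `s(x)` is a subgradient of `|z - ·|` at `x`, then `s(x) (y - x) ≤ |z - y| - |z - x|`, strictly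
when `x` and `y` lie on opposite sides of `z`. Since `s(x)` is a step function of `x`, the
martingale property kills the integral of the left side against `π`, while the right side
integrates to `u_ν(z) - u_μ(z) = 0`. So the inequality is an equality `π`-a.e.
-/

open MeasureTheory

open Set

theorem indicator_smul_increment_eq {E : Type*} [AddCommGroup E] [Module ℝ E] (s : Set E) (c : ℝ)
    (p : E × E) :
    s.indicator (fun _ => c) p.1 • (p.2 - p.1) =
      (s ×ˢ univ).indicator (fun q : E × E => c • (q.2 - q.1)) p := by
  by_cases hp : p.1 ∈ s <;> simp [hp, indicator]

namespace IsMartingaleCoupling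

variable {E : Type*} [NormedAddCommGroup E] [NormedSpace ℝ E] [CompleteSpace E]
  [MeasurableSpace E] [OpensMeasurableSpace E] [SecondCountableTopology E]
  {π : Measure (E × E)}

theorem integrable_fst (hπ : IsMartingaleCoupling π) : Integrable Prod.fst π :=
  hπ.2.1.mono' measurable_fst.aestronglyMeasurable
    (Filter.Eventually.of_forall fun p => le_add_of_nonneg_right (norm_nonneg p.2))

theorem integrable_snd (hπ : IsMartingaleCoupling π) : Integrable Prod.snd π :=
  hπ.2.1.mono' measurable_snd.aestronglyMeasurable
    (Filter.Eventually.of_forall fun p => le_add_of_nonneg_left (norm_nonneg p.1))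

theorem integrable_increment (hπ : IsMartingaleCoupling π) :
    Integrable (fun p : E × E => p.2 - p.1) π :=
  hπ.integrable_snd.sub hπ.integrable_fst

theorem setIntegral_increment_eq_zero (hπ : IsMartingaleCoupling π) {s : Set E}
    (hs : MeasurableSet s) : ∫ p in s ×ˢ univ, (p.2 - p.1) ∂π = 0 := by
  rw [integral_sub hπ.integrable_snd.integrableOn hπ.integrable_fst.integrableOn,
    hπ.2.2 s hs, sub_self]

theorem integrable_indicator_smul_increment (hπ : IsMartingaleCoupling π) {s : Set E}
    (hs : MeasurableSet s) (c : ℝ) :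
    Integrable (fun p : E × E => s.indicator (fun _ => c) p.1 • (p.2 - p.1)) π := by
  simp_rw [indicator_smul_increment_eq]
  exact (hπ.integrable_increment.smul c).indicator (hs.prod MeasurableSet.univ)

theorem integral_indicator_smul_increment (hπ : IsMartingaleCoupling π) {s : Set E}
    (hs : MeasurableSet s) (c : ℝ) :
    ∫ p, s.indicator (fun _ => c) p.1 • (p.2 - p.1) ∂π = 0 := by
  simp_rw [indicator_smul_increment_eq]
  rw [integral_indicator (hs.prod MeasurableSet.univ), integral_smul,
    hπ.setIntegral_increment_eq_zero hs, smul_zero]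

end IsMartingaleCoupling

noncomputable def absSubSlope (z x : ℝ) : ℝ := if x < z then -1 else 1

theorem absSubSlope_eq (z x : ℝ) :
    absSubSlope z x =
      (univ : Set ℝ).indicator (fun _ => 1) x + (Iio z).indicator (fun _ => -2) x := by
  by_cases hx : x < z
  · simp [absSubSlope, hx]; norm_num
  · simp [absSubSlope, hx]

theorem absSubSlope_mul_le (z x y : ℝ) : absSubSlope z x * (y - x) ≤ |z - y| - |z - x| := by
  unfold absSubSlope
  split_ifs with hx
  · rw [abs_of_pos (sub_pos.2 hx)]; linarith [le_abs_self (z - y)]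
  · rw [abs_of_nonpos (a := z - x) (by linarith)]; linarith [neg_le_abs (z - y)]

theorem absSubSlope_mul_lt {z x y : ℝ} (h : (x < z ∧ z < y) ∨ (y < z ∧ z < x)) :
    absSubSlope z x * (y - x) < |z - y| - |z - x| := by
  rcases h with ⟨hx, hy⟩ | ⟨hy, hx⟩
  · rw [absSubSlope, if_pos hx, abs_of_pos (sub_pos.2 hx), abs_of_neg (sub_neg.2 hy)]
    linarith
  · rw [absSubSlope, if_neg hx.not_gt, abs_of_neg (sub_neg.2 hx), abs_of_pos (sub_pos.2 hy)]
    linarith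

namespace IsMartingaleCoupling

variable {π : Measure (ℝ × ℝ)}

theorem integrable_absSubSlope_mul_increment (hπ : IsMartingaleCoupling π) (z : ℝ) :
    Integrable (fun p : ℝ × ℝ => absSubSlope z p.1 * (p.2 - p.1)) π := by
  simp_rw [absSubSlope_eq, add_mul, ← smul_eq_mul]
  exact (hπ.integrable_indicator_smul_increment MeasurableSet.univ 1).add
    (hπ.integrable_indicator_smul_increment measurableSet_Iio (-2))

theorem integral_absSubSlope_mul_increment (hπ : IsMartingaleCoupling π) (z : ℝ) :
    ∫ p, absSubSlope z p.1 * (p.2 - p.1) ∂π = 0 := by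
  simp_rw [absSubSlope_eq, add_mul, ← smul_eq_mul]
  rw [integral_add (hπ.integrable_indicator_smul_increment MeasurableSet.univ 1)
      (hπ.integrable_indicator_smul_increment measurableSet_Iio (-2)),
    hπ.integral_indicator_smul_increment MeasurableSet.univ 1,
    hπ.integral_indicator_smul_increment measurableSet_Iio (-2), add_zero]

end IsMartingaleCoupling

section Marginals

variable {α β : Type*} [MeasurableSpace α] [MeasurableSpace β] {π : Measure (α × β)}

theorem integral_comp_fst_eq {f : α → ℝ} (hf : AEStronglyMeasurable f π.fst) :
    ∫ p, f p.1 ∂π = ∫ t, f t ∂π.fst :=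
  (integral_map measurable_fst.aemeasurable hf).symm

theorem integral_comp_snd_eq {f : β → ℝ} (hf : AEStronglyMeasurable f π.snd) :
    ∫ p, f p.2 ∂π = ∫ t, f t ∂π.snd :=
  (integral_map measurable_snd.aemeasurable hf).symm

end Marginals

theorem stmt17_general (μ ν : Measure ℝ)
    (z : ℝ) (hz : (∫ t, |z - t| ∂μ) = ∫ t, |z - t| ∂ν)
    (π : Measure (ℝ × ℝ)) (hπ : IsMartingaleCoupling π)
    (hfst : π.fst = μ) (hsnd : π.snd = ν) :
    π {p : ℝ × ℝ | (p.1 < z ∧ z < p.2) ∨ (p.2 < z ∧ z < p.1)} = 0 := by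
  have : IsProbabilityMeasure π := hπ.1
  have hdist : Continuous fun t : ℝ => |z - t| := (continuous_const.sub continuous_id).abs
  have hdist₂ : Integrable (fun p : ℝ × ℝ => |z - p.2|) π :=
    ((integrable_const z).sub hπ.integrable_snd).abs
  have hdist₁ : Integrable (fun p : ℝ × ℝ => |z - p.1|) π :=
    ((integrable_const z).sub hπ.integrable_fst).abs
  have hpot : ∫ p, (|z - p.2| - |z - p.1|) ∂π = 0 := by
    rw [integral_sub hdist₂ hdist₁, integral_comp_snd_eq hdist.aestronglyMeasurable,
      integral_comp_fst_eq hdist.aestronglyMeasurable, hsnd, hfst, hz, sub_self]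
  have hae := (integral_eq_iff_of_ae_le (hπ.integrable_absSubSlope_mul_increment z)
    (hdist₂.sub hdist₁) (Filter.Eventually.of_forall fun p => absSubSlope_mul_le z p.1 p.2)).1
      ((hπ.integral_absSubSlope_mul_increment z).trans hpot.symm)
  exact measure_mono_null (fun p hp => (absSubSlope_mul_lt hp).ne) (ae_iff.1 hae)

/-- If `μ ≤_c ν` and the potential functions agree at `z`, then every martingale
coupling of `μ` and `ν` gives no mass to `{(x,y) : x < z < y or y < z < x}`. -/
theorem stmt17 (μ ν : Measure ℝ) [IsProbabilityMeasure μ] [IsProbabilityMeasure ν]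
    (hμ : Integrable (fun t => |t|) μ) (hν : Integrable (fun t => |t|) ν)
    (hconv : ∀ ξ : ℝ → ℝ, ConvexOn ℝ Set.univ ξ → Integrable ξ μ → Integrable ξ ν →
      ∫ t, ξ t ∂μ ≤ ∫ t, ξ t ∂ν)
    (z : ℝ) (hz : (∫ t, |z - t| ∂μ) = ∫ t, |z - t| ∂ν)
    (π : Measure (ℝ × ℝ)) (hπ : IsMartingaleCoupling π)
    (hfst : π.fst = μ) (hsnd : π.snd = ν) :
    π {p : ℝ × ℝ | (p.1 < z ∧ z < p.2) ∨ (p.2 < z ∧ z < p.1)} = 0 :=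
  stmt17_general μ ν z hz π hπ hfst hsnd
end
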